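/- G*₋₁(x,y) = 2 if and only if (x,y) ∈ {(4n+2, 4n), (4n+3, 4n+1), (4n, 4n+2), (4n+1, 4n+3) : n ≥ 1} ∪ {(0,3),(1,2),(2,1),(3,0)}. -/
import Mathlib


/-- mex of a finite set of integers: least nonnegative integer not in the set
(negative elements are ignored). -/
noncomputable def mexZ (S : Finset ℤ) : ℤ := ((sInf {n : ℕ | (n : ℤ) ∉ S} : ℕ) : ℤ)

/-- `G*₋₁(x,y)`: `G*₋₁(0,0) = 0`, `G*₋₁(0,1) = G*₋₁(1,0) = -1`, and for `x + y > 1`,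
`G*₋₁(x,y) = mex({G*₋₁(x',y) : x' < x} ∪ {G*₋₁(x,y') : y' < y})`. -/
noncomputable def Gs : ℕ → ℕ → ℤ
  | x, y =>
    if x + y = 0 then 0 else if x + y = 1 then -1 else
    mexZ (((Finset.range x).attach.image fun x' => Gs x'.1 y) ∪
          ((Finset.range y).attach.image fun y' => Gs x y'.1))
termination_by x y => x + y
decreasing_by
  · have := x'.2; simp only [Finset.mem_range] at this; omega
  · have := y'.2; simp only [Finset.mem_range] at this; omega

noncomputable def opts (x y : ℕ) : Finset ℤ :=
  ((Finset.range x).attach.image fun x' => Gs x'.1 y) ∪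
  ((Finset.range y).attach.image fun y' => Gs x y'.1)

lemma gs_rec (x y : ℕ) (h : 2 ≤ x + y) : Gs x y = mexZ (opts x y) := by
  rw [Gs]
  rw [if_neg (by omega), if_neg (by omega)]
  rfl

lemma mem_opts (x y : ℕ) (v : ℤ) :
    v ∈ opts x y ↔ (∃ x' < x, Gs x' y = v) ∨ (∃ y' < y, Gs x y' = v) := by
  simp [opts, Finset.mem_union, Finset.mem_image, Subtype.exists, Finset.mem_range]

lemma mex_nonempty (S : Finset ℤ) : {n : ℕ | (n : ℤ) ∉ S}.Nonempty := by
  have hf : {n : ℕ | (n : ℤ) ∈ S}.Finite :=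
    Set.Finite.preimage (Function.Injective.injOn (fun a b h => by exact_mod_cast h))
      S.finite_toSet
  exact (Set.Finite.infinite_compl hf).nonempty

lemma mexZ_not_mem (S : Finset ℤ) : mexZ S ∉ S := Nat.sInf_mem (mex_nonempty S)

lemma mexZ_ne (S : Finset ℤ) (v : ℤ) (h : v ∈ S) : mexZ S ≠ v := by
  intro he; exact mexZ_not_mem S (he ▸ h)

lemma mexZ_eq (S : Finset ℤ) (v : ℕ) (h1 : ∀ u : ℕ, u < v → (u : ℤ) ∈ S)
    (h2 : (v : ℤ) ∉ S) : mexZ S = v := by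
  unfold mexZ
  norm_cast
  refine le_antisymm (Nat.sInf_le h2) ?_
  by_contra hlt
  push_neg at hlt
  exact Nat.sInf_mem (mex_nonempty S) (h1 _ hlt)

lemma mexZ_eq_zero (S : Finset ℤ) (h : (0 : ℤ) ∉ S) : mexZ S = 0 := by
  have := mexZ_eq S 0 (fun u hu => absurd hu (by omega)) (by exact_mod_cast h)
  exact_mod_cast this

lemma mexZ_eq_one (S : Finset ℤ) (h0 : (0 : ℤ) ∈ S) (h1 : (1 : ℤ) ∉ S) : mexZ S = 1 := by
  have := mexZ_eq S 1 (fun u hu => by interval_cases u; exact_mod_cast h0) (by exact_mod_cast h1)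
  exact_mod_cast this

lemma mexZ_eq_two (S : Finset ℤ) (h0 : (0 : ℤ) ∈ S) (h1 : (1 : ℤ) ∈ S) (h2 : (2 : ℤ) ∉ S) :
    mexZ S = 2 := by
  have := mexZ_eq S 2 (fun u hu => by interval_cases u <;> [exact_mod_cast h0; exact_mod_cast h1])
    (by exact_mod_cast h2)
  exact_mod_cast this

/-- positions where `G*₋₁` equals 1 -/
def S1 (x y : ℕ) : Prop :=
  (x = 0 ∧ y = 2) ∨ (x = 2 ∧ y = 0) ∨ (x = 1 ∧ y = 3) ∨ (x = 3 ∧ y = 1) ∨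
  (4 ≤ x ∧ x % 2 = 0 ∧ y = x + 1) ∨ (4 ≤ y ∧ y % 2 = 0 ∧ x = y + 1)

/-- positions where `G*₋₁` equals 2 -/
def S2 (x y : ℕ) : Prop :=
  (x = 0 ∧ y = 3) ∨ (x = 1 ∧ y = 2) ∨ (x = 2 ∧ y = 1) ∨ (x = 3 ∧ y = 0) ∨
  (6 ≤ x ∧ x % 4 = 2 ∧ y + 2 = x) ∨ (7 ≤ x ∧ x % 4 = 3 ∧ y + 2 = x) ∨
  (6 ≤ y ∧ y % 4 = 2 ∧ x + 2 = y) ∨ (7 ≤ y ∧ y % 4 = 3 ∧ x + 2 = y)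

lemma S1_symm {a b : ℕ} (h : S1 a b) : S1 b a := by
  simp only [S1] at h ⊢
  rcases h with h | h | h | h | h | h
  · exact Or.inr (Or.inl ⟨h.2, h.1⟩)
  · exact Or.inl ⟨h.2, h.1⟩
  · exact Or.inr (Or.inr (Or.inr (Or.inl ⟨h.2, h.1⟩)))
  · exact Or.inr (Or.inr (Or.inl ⟨h.2, h.1⟩))
  · exact Or.inr (Or.inr (Or.inr (Or.inr (Or.inr ⟨h.1, h.2.1, h.2.2⟩))))
  · exact Or.inr (Or.inr (Or.inr (Or.inr (Or.inl ⟨h.1, h.2.1, h.2.2⟩))))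

lemma S2_symm {a b : ℕ} (h : S2 a b) : S2 b a := by
  simp only [S2] at h ⊢
  rcases h with h | h | h | h | h | h | h | h
  · exact Or.inr (Or.inr (Or.inr (Or.inl ⟨h.2, h.1⟩)))
  · exact Or.inr (Or.inr (Or.inl ⟨h.2, h.1⟩))
  · exact Or.inr (Or.inl ⟨h.2, h.1⟩)
  · exact Or.inl ⟨h.2, h.1⟩
  · exact Or.inr (Or.inr (Or.inr (Or.inr (Or.inr (Or.inr (Or.inl ⟨h.1, h.2.1, h.2.2⟩))))))
  · exact Or.inr (Or.inr (Or.inr (Or.inr (Or.inr (Or.inr (Or.inr ⟨h.1, h.2.1, h.2.2⟩))))))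
  · exact Or.inr (Or.inr (Or.inr (Or.inr (Or.inl ⟨h.1, h.2.1, h.2.2⟩))))
  · exact Or.inr (Or.inr (Or.inr (Or.inr (Or.inr (Or.inl ⟨h.1, h.2.1, h.2.2⟩)))))

/-- every off-diagonal position (with `x+y ≥ 2`) not in `S1` has an option in `S1` -/
lemma L1aux (x y : ℕ) (h : x < y) (hs : 2 ≤ x + y) (h1 : ¬S1 x y) :
    (∃ x' < x, S1 x' y) ∨ (∃ y' < y, S1 x y') := by
  have A1 : ¬(x = 0 ∧ y = 2) := fun hh => h1 (Or.inl hh)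
  have A3 : ¬(x = 1 ∧ y = 3) := fun hh => h1 (Or.inr (Or.inr (Or.inl hh)))
  have A5 : ¬(4 ≤ x ∧ x % 2 = 0 ∧ y = x + 1) := fun hh =>
    h1 (Or.inr (Or.inr (Or.inr (Or.inr (Or.inl hh)))))
  clear h1
  simp only [S1]
  by_cases hsp : x = 1 ∧ y = 2
  · exact Or.inl ⟨0, by omega, Or.inl ⟨by omega, by omega⟩⟩
  · have hc : x = 0 ∨ x = 1 ∨ x = 2 ∨ x = 3 ∨ (4 ≤ x ∧ x % 2 = 0) ∨ (5 ≤ x ∧ x % 2 = 1) := by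
      omega
    rcases hc with hc | hc | hc | hc | hc | hc
    · exact Or.inr ⟨2, by omega, Or.inl ⟨by omega, by omega⟩⟩
    · exact Or.inr ⟨3, by omega, Or.inr (Or.inr (Or.inl ⟨by omega, by omega⟩))⟩
    · exact Or.inr ⟨0, by omega, Or.inr (Or.inl ⟨by omega, by omega⟩)⟩
    · exact Or.inr ⟨1, by omega, Or.inr (Or.inr (Or.inr (Or.inl ⟨by omega, by omega⟩)))⟩
    · exact Or.inr ⟨x + 1, by omega, Or.inr (Or.inr (Or.inr (Or.inr
        (Or.inl ⟨by omega, by omega, by omega⟩))))⟩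
    · exact Or.inr ⟨x - 1, by omega, Or.inr (Or.inr (Or.inr (Or.inr (Or.inr
        ⟨by omega, by omega, by omega⟩))))⟩

lemma L1 (x y : ℕ) (hxy : x ≠ y) (hs : 2 ≤ x + y) (h1 : ¬S1 x y) :
    (∃ x' < x, S1 x' y) ∨ (∃ y' < y, S1 x y') := by
  rcases lt_or_gt_of_ne hxy with h | h
  · exact L1aux x y h hs h1
  · rcases L1aux y x h (by omega) (fun hh => h1 (S1_symm hh)) with ⟨a, ha, hw⟩ | ⟨b, hb, hw⟩
    · exact Or.inr ⟨a, ha, S1_symm hw⟩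
    · exact Or.inl ⟨b, hb, S1_symm hw⟩

/-- every position outside the diagonal, `S1` and `S2` (with `x+y ≥ 2`) has an option in `S2` -/
lemma L2aux (x y : ℕ) (h : x < y) (hs : 2 ≤ x + y) (h1 : ¬S1 x y) (h2 : ¬S2 x y) :
    (∃ x' < x, S2 x' y) ∨ (∃ y' < y, S2 x y') := by
  have A1 : ¬(x = 0 ∧ y = 2) := fun hh => h1 (Or.inl hh)
  have A5 : ¬(4 ≤ x ∧ x % 2 = 0 ∧ y = x + 1) := fun hh =>
    h1 (Or.inr (Or.inr (Or.inr (Or.inr (Or.inl hh)))))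
  have B1 : ¬(x = 0 ∧ y = 3) := fun hh => h2 (Or.inl hh)
  have B2 : ¬(x = 1 ∧ y = 2) := fun hh => h2 (Or.inr (Or.inl hh))
  have C3 : ¬(6 ≤ y ∧ y % 4 = 2 ∧ x + 2 = y) := fun hh =>
    h2 (Or.inr (Or.inr (Or.inr (Or.inr (Or.inr (Or.inr (Or.inl hh)))))))
  have C4 : ¬(7 ≤ y ∧ y % 4 = 3 ∧ x + 2 = y) := fun hh =>
    h2 (Or.inr (Or.inr (Or.inr (Or.inr (Or.inr (Or.inr (Or.inr hh)))))))
  clear h1 h2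
  simp only [S2]
  by_cases hsp : x % 4 = 1 ∧ 4 ≤ x ∧ y = x + 1
  · refine Or.inl ⟨x - 1, by omega, Or.inr (Or.inr (Or.inr (Or.inr (Or.inr (Or.inr
      (Or.inl ⟨by omega, by omega, by omega⟩))))))⟩
  · have hc : x = 0 ∨ x = 1 ∨ x = 2 ∨ x = 3 ∨ (4 ≤ x ∧ x % 4 = 0) ∨ (4 ≤ x ∧ x % 4 = 1) ∨
        (4 ≤ x ∧ x % 4 = 2) ∨ (4 ≤ x ∧ x % 4 = 3) := by omega
    rcases hc with hc | hc | hc | hc | hc | hc | hc | hc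
    · exact Or.inr ⟨3, by omega, Or.inl ⟨by omega, by omega⟩⟩
    · exact Or.inr ⟨2, by omega, Or.inr (Or.inl ⟨by omega, by omega⟩)⟩
    · exact Or.inr ⟨1, by omega, Or.inr (Or.inr (Or.inl ⟨by omega, by omega⟩))⟩
    · exact Or.inr ⟨0, by omega, Or.inr (Or.inr (Or.inr (Or.inl ⟨by omega, by omega⟩)))⟩
    · exact Or.inr ⟨x + 2, by omega, Or.inr (Or.inr (Or.inr (Or.inr (Or.inr (Or.inr
        (Or.inl ⟨by omega, by omega, by omega⟩))))))⟩
    · exact Or.inr ⟨x + 2, by omega, Or.inr (Or.inr (Or.inr (Or.inr (Or.inr (Or.inr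
        (Or.inr ⟨by omega, by omega, by omega⟩))))))⟩
    · exact Or.inr ⟨x - 2, by omega, Or.inr (Or.inr (Or.inr (Or.inr
        (Or.inl ⟨by omega, by omega, by omega⟩))))⟩
    · exact Or.inr ⟨x - 2, by omega, Or.inr (Or.inr (Or.inr (Or.inr (Or.inr
        (Or.inl ⟨by omega, by omega, by omega⟩)))))⟩

lemma L2 (x y : ℕ) (hxy : x ≠ y) (hs : 2 ≤ x + y) (h1 : ¬S1 x y) (h2 : ¬S2 x y) :
    (∃ x' < x, S2 x' y) ∨ (∃ y' < y, S2 x y') := by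
  rcases lt_or_gt_of_ne hxy with h | h
  · exact L2aux x y h hs h1 h2
  · rcases L2aux y x h (by omega) (fun hh => h1 (S1_symm hh)) (fun hh => h2 (S2_symm hh)) with
      ⟨a, ha, hw⟩ | ⟨b, hb, hw⟩
    · exact Or.inr ⟨a, ha, S2_symm hw⟩
    · exact Or.inl ⟨b, hb, S2_symm hw⟩

lemma key : ∀ N x y : ℕ, x + y = N →
    (Gs x y = 0 ↔ x = y) ∧ (Gs x y = 1 ↔ S1 x y) ∧ (Gs x y = 2 ↔ S2 x y) := by
  intro N
  induction N using Nat.strong_induction_on with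
  | _ N IH =>
    intro x y hN
    have IH' : ∀ a b : ℕ, a + b < x + y →
        (Gs a b = 0 ↔ a = b) ∧ (Gs a b = 1 ↔ S1 a b) ∧ (Gs a b = 2 ↔ S2 a b) :=
      fun a b hab => IH (a + b) (by omega) a b rfl
    by_cases hsum0 : x + y = 0
    · have hx : x = 0 := by omega
      have hy : y = 0 := by omega
      subst hx hy
      have hG : Gs 0 0 = 0 := by rw [Gs]; norm_num
      refine ⟨by simp [hG], ?_, ?_⟩ <;> constructor <;> intro hh
      · rw [hG] at hh; omega
      · exfalso; simp only [S1] at hh; omega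
      · rw [hG] at hh; omega
      · exfalso; simp only [S2] at hh; omega
    by_cases hsum1 : x + y = 1
    · have hG : Gs x y = -1 := by rw [Gs]; rw [if_neg (by omega), if_pos hsum1]
      refine ⟨?_, ?_, ?_⟩ <;> constructor <;> intro hh
      · rw [hG] at hh; omega
      · omega
      · rw [hG] at hh; omega
      · exfalso; simp only [S1] at hh; omega
      · rw [hG] at hh; omega
      · exfalso; simp only [S2] at hh; omega
    -- main case
    have hs : 2 ≤ x + y := by omega
    have hrec := gs_rec x y hs
    by_cases hd : x = y
    · subst hd
      have hG : Gs x x = 0 := by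
        rw [hrec]
        apply mexZ_eq_zero
        rw [mem_opts]
        rintro (⟨x', hx', hv⟩ | ⟨y', hy', hv⟩)
        · have := ((IH' x' x (by omega)).1).1 hv; omega
        · have := ((IH' x y' (by omega)).1).1 hv; omega
      refine ⟨by simp [hG], ?_, ?_⟩ <;> constructor <;> intro hh
      · rw [hG] at hh; omega
      · exfalso; simp only [S1] at hh; omega
      · rw [hG] at hh; omega
      · exfalso; simp only [S2] at hh; omega
    -- off the diagonal 0 is always an option
    have h0 : (0 : ℤ) ∈ opts x y := by
      rw [mem_opts]
      rcases lt_or_gt_of_ne hd with h | h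
      · exact Or.inr ⟨x, h, ((IH' x x (by omega)).1).2 rfl⟩
      · exact Or.inl ⟨y, h, ((IH' y y (by omega)).1).2 rfl⟩
    have hne0 : Gs x y ≠ 0 := by rw [hrec]; exact mexZ_ne _ _ h0
    by_cases hS1 : S1 x y
    · have hG : Gs x y = 1 := by
        rw [hrec]
        apply mexZ_eq_one _ h0
        rw [mem_opts]
        rintro (⟨x', hx', hv⟩ | ⟨y', hy', hv⟩)
        · have := ((IH' x' y (by omega)).2).1.1 hv
          simp only [S1] at this hS1; omega
        · have := ((IH' x y' (by omega)).2).1.1 hv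
          simp only [S1] at this hS1; omega
      refine ⟨⟨fun hh => absurd hne0 (by simp [hh]), fun hh => absurd hh hd⟩,
        ⟨fun _ => hS1, fun _ => hG⟩, ?_⟩
      constructor <;> intro hh
      · rw [hG] at hh; omega
      · exfalso; simp only [S1, S2] at hS1 hh; omega
    by_cases hS2 : S2 x y
    · have h1 : (1 : ℤ) ∈ opts x y := by
        rw [mem_opts]
        rcases L1 x y hd hs hS1 with ⟨x', hx', hw⟩ | ⟨y', hy', hw⟩
        · exact Or.inl ⟨x', hx', ((IH' x' y (by omega)).2).1.2 hw⟩
        · exact Or.inr ⟨y', hy', ((IH' x y' (by omega)).2).1.2 hw⟩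
      have hG : Gs x y = 2 := by
        rw [hrec]
        apply mexZ_eq_two _ h0 h1
        rw [mem_opts]
        rintro (⟨x', hx', hv⟩ | ⟨y', hy', hv⟩)
        · have := ((IH' x' y (by omega)).2).2.1 hv
          simp only [S2] at this hS2; omega
        · have := ((IH' x y' (by omega)).2).2.1 hv
          simp only [S2] at this hS2; omega
      refine ⟨⟨fun hh => absurd hne0 (by simp [hh]), fun hh => absurd hh hd⟩, ?_,
        ⟨fun _ => hS2, fun _ => hG⟩⟩
      constructor <;> intro hh
      · rw [hG] at hh; omega
      · exact absurd hh hS1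
    -- outside all the sets
    have h1 : (1 : ℤ) ∈ opts x y := by
      rw [mem_opts]
      rcases L1 x y hd hs hS1 with ⟨x', hx', hw⟩ | ⟨y', hy', hw⟩
      · exact Or.inl ⟨x', hx', ((IH' x' y (by omega)).2).1.2 hw⟩
      · exact Or.inr ⟨y', hy', ((IH' x y' (by omega)).2).1.2 hw⟩
    have h2 : (2 : ℤ) ∈ opts x y := by
      rw [mem_opts]
      rcases L2 x y hd hs hS1 hS2 with ⟨x', hx', hw⟩ | ⟨y', hy', hw⟩
      · exact Or.inl ⟨x', hx', ((IH' x' y (by omega)).2).2.2 hw⟩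
      · exact Or.inr ⟨y', hy', ((IH' x y' (by omega)).2).2.2 hw⟩
    have hne1 : Gs x y ≠ 1 := by rw [hrec]; exact mexZ_ne _ _ h1
    have hne2 : Gs x y ≠ 2 := by rw [hrec]; exact mexZ_ne _ _ h2
    exact ⟨⟨fun hh => absurd hh hne0, fun hh => absurd hh hd⟩,
      ⟨fun hh => absurd hh hne1, fun hh => absurd hh hS1⟩,
      ⟨fun hh => absurd hh hne2, fun hh => absurd hh hS2⟩⟩

theorem Gs_eq_two_iff (x y : ℕ) :
    Gs x y = 2 ↔
      ((∃ n : ℕ, 1 ≤ n ∧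
          ((x = 4 * n + 2 ∧ y = 4 * n) ∨ (x = 4 * n + 3 ∧ y = 4 * n + 1) ∨
           (x = 4 * n ∧ y = 4 * n + 2) ∨ (x = 4 * n + 1 ∧ y = 4 * n + 3))) ∨
        (x, y) = (0, 3) ∨ (x, y) = (1, 2) ∨ (x, y) = (2, 1) ∨ (x, y) = (3, 0)) := by
  rw [((key (x + y) x y rfl).2).2]
  simp only [Prod.mk.injEq, S2]
  constructor
  · rintro (h | h | h | h | h | h | h | h)
    · exact Or.inr (Or.inl ⟨h.1, h.2⟩)
    · exact Or.inr (Or.inr (Or.inl ⟨h.1, h.2⟩))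
    · exact Or.inr (Or.inr (Or.inr (Or.inl ⟨h.1, h.2⟩)))
    · exact Or.inr (Or.inr (Or.inr (Or.inr ⟨h.1, h.2⟩)))
    · exact Or.inl ⟨x / 4, by omega, Or.inl ⟨by omega, by omega⟩⟩
    · exact Or.inl ⟨x / 4, by omega, Or.inr (Or.inl ⟨by omega, by omega⟩)⟩
    · exact Or.inl ⟨y / 4, by omega, Or.inr (Or.inr (Or.inl ⟨by omega, by omega⟩))⟩
    · exact Or.inl ⟨y / 4, by omega, Or.inr (Or.inr (Or.inr ⟨by omega, by omega⟩))⟩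
  · rintro (⟨n, hn, (h | h | h | h)⟩ | h | h | h | h)
    · exact Or.inr (Or.inr (Or.inr (Or.inr (Or.inl ⟨by omega, by omega, by omega⟩))))
    · exact Or.inr (Or.inr (Or.inr (Or.inr (Or.inr (Or.inl ⟨by omega, by omega, by omega⟩)))))
    · exact Or.inr (Or.inr (Or.inr (Or.inr (Or.inr (Or.inr
        (Or.inl ⟨by omega, by omega, by omega⟩))))))
    · exact Or.inr (Or.inr (Or.inr (Or.inr (Or.inr (Or.inr (Or.inr
        ⟨by omega, by omega, by omega⟩))))))
    · exact Or.inl ⟨h.1, h.2⟩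
    · exact Or.inr (Or.inl ⟨h.1, h.2⟩)
    · exact Or.inr (Or.inr (Or.inl ⟨h.1, h.2⟩))
    · exact Or.inr (Or.inr (Or.inr (Or.inl ⟨h.1, h.2⟩)))
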